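/- Let G be an FC-group, i.e., a group in which every conjugacy class is finite. Then every left syndetic subset of G is right syndetic, and conversely. -/

import Mathlib

/-- `S` is left syndetic: `G = ⋃_{h ∈ H} Sh⁻¹` for some finite `H`. -/
def leftSyndetic {G : Type*} [Group G] (S : Set G) : Prop :=
  ∃ H : Finset G, ∀ g : G, ∃ h ∈ H, g * h ∈ S

/-- `S` is right syndetic: `G = ⋃_{h ∈ H} h⁻¹S` for some finite `H`. -/
def rightSyndetic {G : Type*} [Group G] (S : Set G) : Prop :=
  ∃ H : Finset G, ∀ g : G, ∃ h ∈ H, h * g ∈ S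

/-! Since `g * h = (g * h * g⁻¹) * g` and `h * g = g * (g⁻¹ * h * g)`, a finite set of
translates witnessing syndeticity on one side can be replaced by the finite union of the
conjugacy classes of its elements on the other side. -/

section

variable {G : Type*} [Group G]

theorem Finset.finite_biUnion_conjugates {H : Finset G}
    (hFC : ∀ h ∈ H, (Set.range fun x : G => x * h * x⁻¹).Finite) :
    (⋃ h ∈ H, Set.range fun x : G => x * h * x⁻¹).Finite :=
  H.finite_toSet.biUnion hFC

theorem rightSyndetic_of_leftSyndetic
    (hFC : ∀ g : G, (Set.range fun x : G => x * g * x⁻¹).Finite) {S : Set G}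
    (hS : leftSyndetic S) : rightSyndetic S := by
  obtain ⟨H, hH⟩ := hS
  refine ⟨(H.finite_biUnion_conjugates fun h _ => hFC h).toFinset, fun g => ?_⟩
  obtain ⟨h, hh, hgh⟩ := hH g
  refine ⟨g * h * g⁻¹, ?_, by simpa only [inv_mul_cancel_right] using hgh⟩
  simpa only [Set.Finite.mem_toFinset, Set.mem_iUnion] using ⟨h, hh, g, rfl⟩

theorem leftSyndetic_of_rightSyndetic
    (hFC : ∀ g : G, (Set.range fun x : G => x * g * x⁻¹).Finite) {S : Set G}
    (hS : rightSyndetic S) : leftSyndetic S := by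
  obtain ⟨H, hH⟩ := hS
  refine ⟨(H.finite_biUnion_conjugates fun h _ => hFC h).toFinset, fun g => ?_⟩
  obtain ⟨h, hh, hgh⟩ := hH g
  refine ⟨g⁻¹ * h * g, ?_, by simpa only [mul_assoc, mul_inv_cancel_left] using hgh⟩
  simpa only [Set.Finite.mem_toFinset, Set.mem_iUnion] using ⟨h, hh, g⁻¹, by simp only [inv_inv]⟩

end

/-- In an FC-group (all conjugacy classes finite), a set is left syndetic iff it is
right syndetic. -/
theorem stmt13 {G : Type*} [Group G]
    (hFC : ∀ g : G, (Set.range fun x : G => x * g * x⁻¹).Finite) (S : Set G) :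
    leftSyndetic S ↔ rightSyndetic S :=
  ⟨rightSyndetic_of_leftSyndetic hFC, leftSyndetic_of_rightSyndetic hFC⟩
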